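/- Let $(a_n)_{n\ge 0}$ be a sequence of nonnegative reals and $(c_n)_{n\ge 1}$, $(d_n)_{n\ge 1}$ sequences of nonnegative reals satisfying $a_n \le (1+c_n)a_{n-1} + d_n \sum_{k=1}^{n} a_{n-k}$ for all $n \ge 1$. If $\sum_{n=1}^{\infty} (c_n + n d_n) < \infty$, then the sequence $(a_n)$ is bounded. -/
import Mathlib


/-- Lemma 4 of the paper: a nonnegative sequence satisfying
`a n ≤ (1 + c n) * a (n-1) + d n * ∑_{k=1}^{n} a (n-k)` for all `n ≥ 1`,
with `∑_{n≥1} (c n + n * d n) < ∞`, is bounded. -/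
theorem stmt_0 (a c d : ℕ → ℝ)
    (ha : ∀ n, 0 ≤ a n) (hc : ∀ n, 0 ≤ c n) (hd : ∀ n, 0 ≤ d n)
    (hrec : ∀ n : ℕ, 1 ≤ n →
      a n ≤ (1 + c n) * a (n - 1) + d n * ∑ k ∈ Finset.range n, a k)
    (hsum : Summable (fun n : ℕ => c (n + 1) + ((n : ℝ) + 1) * d (n + 1))) :
    ∃ M : ℝ, ∀ n, a n ≤ M := by
  set b : ℕ → ℝ := fun n => c (n + 1) + ((n : ℝ) + 1) * d (n + 1) with hb
  have hb0 : ∀ n, 0 ≤ b n := fun n => by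
    have := hc (n + 1); have := hd (n + 1); positivity
  set P : ℕ → ℝ := fun n => ∏ k ∈ Finset.range n, (1 + b k) with hPdef
  have hP1 : ∀ n, (1 : ℝ) ≤ P n := by
    intro n
    have := Finset.prod_le_prod (s := Finset.range n) (f := fun _ => (1 : ℝ))
      (g := fun k => 1 + b k) (fun k _ => zero_le_one) (fun k _ => by simpa using hb0 k)
    simpa using this
  have hPmono : ∀ {m n : ℕ}, m ≤ n → P m ≤ P n := by
    intro m n hmn
    induction n, hmn using Nat.le_induction with
    | base => exact le_refl _
    | succ n hmn ih =>
      refine ih.trans ?_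
      have hstep : P (n + 1) = P n * (1 + b n) := by
        simp [hPdef, Finset.prod_range_succ]
      rw [hstep]
      exact le_mul_of_one_le_right (zero_le_one.trans (hP1 n)) (by linarith [hb0 n])
  have key : ∀ n, a n ≤ a 0 * P n := by
    intro n
    induction n using Nat.strong_induction_on with
    | _ n ih =>
      rcases Nat.eq_zero_or_pos n with rfl | hn
      · simp [hPdef]
      · have h1 : a (n - 1) ≤ a 0 * P (n - 1) := ih (n - 1) (by omega)
        have h2 : ∑ k ∈ Finset.range n, a k ≤ (n : ℝ) * (a 0 * P (n - 1)) := by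
          calc ∑ k ∈ Finset.range n, a k
              ≤ ∑ k ∈ Finset.range n, a 0 * P (n - 1) := by
                apply Finset.sum_le_sum
                intro k hk
                have hk' : k < n := Finset.mem_range.mp hk
                calc a k ≤ a 0 * P k := ih k hk'
                  _ ≤ a 0 * P (n - 1) := by
                      apply mul_le_mul_of_nonneg_left (hPmono (by omega)) (ha 0)
            _ = (n : ℝ) * (a 0 * P (n - 1)) := by
                rw [Finset.sum_const, Finset.card_range]; ring
        have hPn : P n = P (n - 1) * (1 + b (n - 1)) := by
          have : n = (n - 1) + 1 := by omega
          rw [this, hPdef]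
          simp [Finset.prod_range_succ]
        have hbn : b (n - 1) = c n + (n : ℝ) * d n := by
          have hcast : ((n - 1 : ℕ) : ℝ) + 1 = (n : ℝ) := by
            have : ((n - 1 : ℕ) : ℝ) = (n : ℝ) - 1 := by
              rw [Nat.cast_sub hn]; simp
            rw [this]; ring
          simp only [hb]
          rw [show n - 1 + 1 = n from by omega, hcast]
        calc a n ≤ (1 + c n) * a (n - 1) + d n * ∑ k ∈ Finset.range n, a k :=
              hrec n hn
          _ ≤ (1 + c n) * (a 0 * P (n - 1)) + d n * ((n : ℝ) * (a 0 * P (n - 1))) := by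
              have hcn : 0 ≤ 1 + c n := by linarith [hc n]
              have := mul_le_mul_of_nonneg_left h1 hcn
              have := mul_le_mul_of_nonneg_left h2 (hd n)
              linarith
          _ = a 0 * (P (n - 1) * (1 + (c n + (n : ℝ) * d n))) := by ring
          _ = a 0 * P n := by rw [hPn, hbn]
  refine ⟨a 0 * Real.exp (∑' n, b n), fun n => ?_⟩
  refine (key n).trans (mul_le_mul_of_nonneg_left ?_ (ha 0))
  calc P n ≤ ∏ k ∈ Finset.range n, Real.exp (b k) := by
        apply Finset.prod_le_prod (fun k _ => by linarith [hb0 k])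
        intro k _; linarith [Real.add_one_le_exp (b k)]
    _ = Real.exp (∑ k ∈ Finset.range n, b k) := (Real.exp_sum _ _).symm
    _ ≤ Real.exp (∑' n, b n) := by
        apply Real.exp_le_exp.mpr
        exact Summable.sum_le_tsum _ (fun k _ => hb0 k) hsum
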